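/- arXiv:1806.00275 — 6 statements merged into one kernel-verified Lean document; each statement's English description precedes it below -/
import Mathlib

section
/- For any probability measure ξ on the closed unit ball B_k of ℝ^k and f(x) = (1, x_1, …, x_k)ᵀ, det M(ξ) ≤ det diag(1, 1/k, …, 1/k) = k^{-k}, where M(ξ) = ∫ f f ᵀ dξ. Equality holds for the uniform measure on the sphere S^{k-1}. -/
/-!
Since `M(ξ) 0 0 = 1`, one Schur-complement step turns `det M(ξ)` into the determinant of the
covariance matrix `C` of `ξ`. `C` is positive semidefinite with `tr C = E‖x‖² - ‖E x‖² ≤ 1`, so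
AM-GM on its eigenvalues gives `det C ≤ (tr C / k) ^ k ≤ k⁻ᵏ`. For an orthogonally invariant law
on the sphere, invariance under `x ↦ -x`, single sign flips and coordinate swaps forces `E x = 0`
and `C = k⁻¹ • 1`.
-/

open MeasureTheory Matrix ProbabilityTheory

theorem Real.prod_le_sum_div_card_pow {ι : Type*} [Fintype ι] (z : ι → ℝ) (hz : ∀ i, 0 ≤ z i) :
    ∏ i, z i ≤ ((∑ i, z i) / Fintype.card ι) ^ Fintype.card ι := by
  rcases isEmpty_or_nonempty ι with hι | hι
  · simp
  have hn : (0 : ℝ) < Fintype.card ι := by exact_mod_cast Fintype.card_pos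
  have hprod : 0 ≤ ∏ i, z i := Finset.prod_nonneg fun i _ => hz i
  have amgm := Real.geom_mean_le_arith_mean Finset.univ (fun _ => 1) z (fun _ _ => zero_le_one)
    (by simpa using hn) (fun i _ => hz i)
  simp only [Real.rpow_one, one_mul, Finset.sum_const, Finset.card_univ, nsmul_eq_mul,
    mul_one] at amgm
  calc ∏ i, z i = ((∏ i, z i) ^ (Fintype.card ι : ℝ)⁻¹) ^ Fintype.card ι := by
        rw [← Real.rpow_natCast, ← Real.rpow_mul hprod, inv_mul_cancel₀ hn.ne', Real.rpow_one]
    _ ≤ _ := pow_le_pow_left₀ (Real.rpow_nonneg hprod _) amgm _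

theorem Matrix.PosSemidef.det_le_trace_div_card_pow {n : Type*} [Fintype n] [DecidableEq n]
    {A : Matrix n n ℝ} (hA : A.PosSemidef) :
    A.det ≤ (A.trace / Fintype.card n) ^ Fintype.card n := by
  rw [hA.isHermitian.det_eq_prod_eigenvalues, hA.isHermitian.trace_eq_sum_eigenvalues]
  exact Real.prod_le_sum_div_card_pow _ hA.eigenvalues_nonneg

theorem Matrix.det_eq_det_of_apply_zero_zero_eq_one {R : Type*} [CommRing R] {n : ℕ}
    (A : Matrix (Fin (n + 1)) (Fin (n + 1)) R) (h : A 0 0 = 1) :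
    A.det = (Matrix.of fun i j : Fin n => A i.succ j.succ - A i.succ 0 * A 0 j.succ).det := by
  let c : Fin (n + 1) → R := Fin.cons 0 fun i => A i.succ 0
  let B : Matrix (Fin (n + 1)) (Fin (n + 1)) R := Matrix.of fun i j => A i j - c i * A 0 j
  have hB : A.det = B.det :=
    det_eq_of_forall_row_eq_smul_add_const c 0 rfl fun i j => by simp [B, c]
  rw [hB, det_succ_column_zero, Fin.sum_univ_succ,
    Finset.sum_eq_zero fun i _ => by simp [B, c, h]]
  simp [B, c, h, submatrix]

namespace LinearDesign

variable {ι : Type*} [Fintype ι]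

noncomputable def covMatrix (μ : Measure (ι → ℝ)) : Matrix ι ι ℝ :=
  Matrix.of fun i j => cov[fun x => x i, fun x => x j; μ]

theorem posSemidef_covMatrix {μ : Measure (ι → ℝ)} [IsFiniteMeasure μ]
    (hμ : ∀ i, MemLp (fun x => x i) 2 μ) : (covMatrix μ).PosSemidef := by
  refine posSemidef_iff_dotProduct_mulVec.2 ⟨?_, fun v => ?_⟩
  · ext i j
    exact covariance_comm _ _
  · have hvar := variance_fun_sum (fun i => (hμ i).const_mul (v i))
    simp only [covariance_const_mul_left, covariance_const_mul_right] at hvar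
    calc 0 ≤ _ := variance_nonneg _ μ
      _ = _ := hvar
      _ = _ := by
        simp only [dotProduct, mulVec, covMatrix, of_apply, Finset.mul_sum, star_trivial]
        exact Finset.sum_congr rfl fun i _ => Finset.sum_congr rfl fun j _ => by ring

theorem memLp_apply_of_ae_sum_sq_le_one {μ : Measure (ι → ℝ)} [IsFiniteMeasure μ]
    (hμ : ∀ᵐ x ∂μ, ∑ i, x i ^ 2 ≤ 1) (i : ι) : MemLp (fun x => x i) 2 μ := by
  refine MemLp.of_bound (measurable_pi_apply i).aestronglyMeasurable 1 (hμ.mono fun x hx => ?_)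
  rw [Real.norm_eq_abs, ← sq_le_one_iff_abs_le_one]
  exact (Finset.single_le_sum (fun j _ => sq_nonneg (x j)) (Finset.mem_univ i)).trans hx

theorem trace_covMatrix_le_one {μ : Measure (ι → ℝ)} [IsProbabilityMeasure μ]
    (hμ : ∀ᵐ x ∂μ, ∑ i, x i ^ 2 ≤ 1) : (covMatrix μ).trace ≤ 1 := by
  have hL2 := memLp_apply_of_ae_sum_sq_le_one hμ
  calc (covMatrix μ).trace = ∑ i, Var[fun x => x i; μ] :=
        Finset.sum_congr rfl fun i _ => covariance_self (hL2 i).aemeasurable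
    _ ≤ ∑ i, ∫ x, x i ^ 2 ∂μ :=
        Finset.sum_le_sum fun i _ => variance_le_expectation_sq (hL2 i).aestronglyMeasurable
    _ = ∫ x, ∑ i, x i ^ 2 ∂μ := (integral_finsetSum _ fun i _ => (hL2 i).integrable_sq).symm
    _ ≤ ∫ _, 1 ∂μ :=
        integral_mono_ae (integrable_finsetSum _ fun i _ => (hL2 i).integrable_sq)
          (integrable_const 1) hμ
    _ = 1 := by simp

noncomputable def momentMatrix {k : ℕ} (μ : Measure (Fin k → ℝ)) :
    Matrix (Fin (k + 1)) (Fin (k + 1)) ℝ :=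
  Matrix.of fun i j =>
    ∫ x, (Fin.cons 1 x : Fin (k + 1) → ℝ) i * (Fin.cons 1 x : Fin (k + 1) → ℝ) j ∂μ

section Moment

variable {k : ℕ} {μ : Measure (Fin k → ℝ)} [IsProbabilityMeasure μ]

theorem det_momentMatrix_eq_det_covMatrix (hμ : ∀ i, MemLp (fun x => x i) 2 μ) :
    (momentMatrix μ).det = (covMatrix μ).det := by
  rw [det_eq_det_of_apply_zero_zero_eq_one _ (by simp [momentMatrix])]
  congr 1
  ext i j
  simp [momentMatrix, covMatrix, covariance_eq_sub (hμ i) (hμ j)]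

theorem det_momentMatrix_le (hμ : ∀ᵐ x ∂μ, ∑ i, x i ^ 2 ≤ 1) :
    (momentMatrix μ).det ≤ (1 / k : ℝ) ^ k := by
  have hL2 := memLp_apply_of_ae_sum_sq_le_one hμ
  have hC := posSemidef_covMatrix hL2
  rw [det_momentMatrix_eq_det_covMatrix hL2]
  calc (covMatrix μ).det ≤ ((covMatrix μ).trace / k) ^ k := by
        simpa using hC.det_le_trace_div_card_pow
    _ ≤ (1 / k) ^ k := by
        gcongr
        exacts [div_nonneg hC.trace_nonneg k.cast_nonneg, trace_covMatrix_le_one hμ]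

end Moment

def IsOrthogonallyInvariant [DecidableEq ι] (ν : Measure (ι → ℝ)) : Prop :=
  ∀ O : Matrix ι ι ℝ, O * Oᵀ = 1 → ν.map (fun x => O *ᵥ x) = ν

section Invariant

variable [DecidableEq ι] {ν : Measure (ι → ℝ)}

theorem IsOrthogonallyInvariant.integral_comp_mulVec (hν : IsOrthogonallyInvariant ν)
    {O : Matrix ι ι ℝ} (hO : O * Oᵀ = 1) {f : (ι → ℝ) → ℝ} (hf : AEStronglyMeasurable f ν) :
    ∫ x, f (O *ᵥ x) ∂ν = ∫ x, f x ∂ν := by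
  conv_rhs => rw [← hν O hO]
  rw [integral_map (by fun_prop) (by rwa [hν O hO])]

theorem IsOrthogonallyInvariant.integral_apply_eq_zero (hν : IsOrthogonallyInvariant ν)
    (i : ι) : ∫ x, x i ∂ν = 0 := by
  have h := hν.integral_comp_mulVec (O := -1) (by simp)
    (measurable_pi_apply i).aestronglyMeasurable
  simp only [neg_mulVec, one_mulVec, Pi.neg_apply, integral_neg] at h
  linarith

theorem IsOrthogonallyInvariant.integral_apply_mul_apply_eq_zero
    (hν : IsOrthogonallyInvariant ν) {i j : ι} (hij : i ≠ j) : ∫ x, x i * x j ∂ν = 0 := by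
  let d : ι → ℝ := fun l => if l = i then -1 else 1
  have hd : diagonal d * (diagonal d)ᵀ = 1 := by
    rw [diagonal_transpose, diagonal_mul_diagonal, ← diagonal_one]
    congr 1
    ext l
    by_cases h : l = i <;> simp [d, h]
  have h := hν.integral_comp_mulVec hd (f := fun x => x i * x j) (by fun_prop)
  simp only [mulVec_diagonal, d, if_pos, if_neg hij.symm, one_mul, neg_mul, integral_neg] at h
  linarith

theorem IsOrthogonallyInvariant.integral_apply_sq_eq (hν : IsOrthogonallyInvariant ν)
    (i j : ι) : ∫ x, x i ^ 2 ∂ν = ∫ x, x j ^ 2 ∂ν := by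
  let σ := Equiv.swap i j
  have hσ : σ.permMatrix ℝ * (σ.permMatrix ℝ)ᵀ = 1 := by
    simp [transpose_permMatrix, ← permMatrix_mul, σ]
  rw [← hν.integral_comp_mulVec hσ (f := fun x => x j ^ 2)
    ((continuous_apply j).pow 2).aestronglyMeasurable]
  simp [permMatrix_mulVec, σ]

theorem IsOrthogonallyInvariant.integral_apply_sq_eq_one_div_card
    (hν : IsOrthogonallyInvariant ν) [IsProbabilityMeasure ν]
    (hsph : ∀ᵐ x ∂ν, ∑ i, x i ^ 2 = 1) (i : ι) :
    ∫ x, x i ^ 2 ∂ν = 1 / Fintype.card ι := by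
  have : Nonempty ι := ⟨i⟩
  have hcard : (Fintype.card ι : ℝ) ≠ 0 := Nat.cast_ne_zero.2 Fintype.card_ne_zero
  have hint j : Integrable (fun x => x j ^ 2) ν :=
    (memLp_apply_of_ae_sum_sq_le_one (hsph.mono fun x hx => hx.le) j).integrable_sq
  have hsum : ∑ j, ∫ x, x j ^ 2 ∂ν = 1 := by
    rw [← integral_finsetSum _ fun j _ => hint j, integral_congr_ae hsph]
    simp
  simp only [hν.integral_apply_sq_eq _ i, Finset.sum_const, Finset.card_univ, nsmul_eq_mul] at hsum
  field_simp
  linarith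

theorem IsOrthogonallyInvariant.covMatrix_eq (hν : IsOrthogonallyInvariant ν)
    [IsProbabilityMeasure ν] (hsph : ∀ᵐ x ∂ν, ∑ i, x i ^ 2 = 1) :
    covMatrix ν = (1 / Fintype.card ι : ℝ) • 1 := by
  have hL2 := memLp_apply_of_ae_sum_sq_le_one (hsph.mono fun x hx => hx.le)
  ext i j
  rw [covMatrix, of_apply, covariance_eq_sub (hL2 i) (hL2 j), hν.integral_apply_eq_zero,
    zero_mul, sub_zero, Matrix.smul_apply, one_apply]
  by_cases hij : i = j
  · subst hij
    simp [← sq, hν.integral_apply_sq_eq_one_div_card hsph]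
  · simp [hij, hν.integral_apply_mul_apply_eq_zero hij]

end Invariant

theorem det_momentMatrix_of_isOrthogonallyInvariant {k : ℕ} {ν : Measure (Fin k → ℝ)}
    [IsProbabilityMeasure ν] (hν : IsOrthogonallyInvariant ν)
    (hsph : ∀ᵐ x ∂ν, ∑ i, x i ^ 2 = 1) : (momentMatrix ν).det = (1 / k : ℝ) ^ k := by
  rw [det_momentMatrix_eq_det_covMatrix (memLp_apply_of_ae_sum_sq_le_one
    (hsph.mono fun x hx => hx.le)), hν.covMatrix_eq hsph, det_smul, det_one, mul_one,
    Fintype.card_fin]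

end LinearDesign

open LinearDesign in
theorem stmt4_general (k : ℕ)
    (μ : Measure (Fin k → ℝ)) [IsProbabilityMeasure μ]
    (hsupp : μ {x | ∑ i, (x i) ^ 2 ≤ 1} = 1) :
    (Matrix.of fun i j : Fin (k+1) =>
        ∫ x, (Fin.cons 1 x : Fin (k+1) → ℝ) i * (Fin.cons 1 x : Fin (k+1) → ℝ) j ∂μ).det
      ≤ (1 / k : ℝ) ^ k ∧
    (∀ ν : Measure (Fin k → ℝ), IsProbabilityMeasure ν →
      ν {x | ∑ i, (x i) ^ 2 = 1} = 1 →
      (∀ O : Matrix (Fin k) (Fin k) ℝ, O * Oᵀ = 1 →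
        ν.map (fun x => O.mulVec x) = ν) →
      (Matrix.of fun i j : Fin (k+1) =>
        ∫ x, (Fin.cons 1 x : Fin (k+1) → ℝ) i * (Fin.cons 1 x : Fin (k+1) → ℝ) j ∂ν).det
        = (1 / k : ℝ) ^ k) := by
  have hmeas : Measurable fun x : Fin k → ℝ => ∑ i, x i ^ 2 := by fun_prop
  refine ⟨?_, fun ν _ hsph hν => ?_⟩
  · exact det_momentMatrix_le
      ((mem_ae_iff_prob_eq_one (measurableSet_le hmeas measurable_const)).2 hsupp)
  · exact det_momentMatrix_of_isOrthogonallyInvariant hν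
      ((mem_ae_iff_prob_eq_one (measurableSet_eq_fun hmeas measurable_const)).2 hsph)

/-- D-optimality of the uniform spherical design in the linear model: for any
probability measure on the unit ball, `det M(ξ) ≤ k^{-k}`, with equality for
the uniform (rotation-invariant) measure on the sphere. -/
theorem stmt4 (k : ℕ) (hk : 1 ≤ k)
    (μ : Measure (Fin k → ℝ)) [IsProbabilityMeasure μ]
    (hsupp : μ {x | ∑ i, (x i) ^ 2 ≤ 1} = 1) :
    (Matrix.of fun i j : Fin (k+1) =>
        ∫ x, (Fin.cons 1 x : Fin (k+1) → ℝ) i * (Fin.cons 1 x : Fin (k+1) → ℝ) j ∂μ).det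
      ≤ (1 / k : ℝ) ^ k ∧
    (∀ ν : Measure (Fin k → ℝ), IsProbabilityMeasure ν →
      ν {x | ∑ i, (x i) ^ 2 = 1} = 1 →
      (∀ O : Matrix (Fin k) (Fin k) ℝ, O * Oᵀ = 1 →
        ν.map (fun x => O.mulVec x) = ν) →
      (Matrix.of fun i j : Fin (k+1) =>
        ∫ x, (Fin.cons 1 x : Fin (k+1) → ℝ) i * (Fin.cons 1 x : Fin (k+1) → ℝ) j ∂ν).det
        = (1 / k : ℝ) ^ k) :=
  stmt4_general k μ hsupp
end

section
/- Let k ≥ 2, β₁ > 0, and set x* = (−1 + √(1 − (2/k)β₁ + β₁²))/β₁. Then x* ∈ (−1, 1) and β₁ = 2(1 + k x*)/(k (1 − x*²)); i.e., x* solves the D-optimality equation for Poisson regression. Moreover 1 − (2/k)β₁ + β₁² > 0, so the square root is well defined. -/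
open Set

/-!
With `c = 2 / k`, the equation `β = 2(1 + kx)/(k(1 - x²))` is equivalent (for `x² ≠ 1`) to the
quadratic `β x² + 2x + (c - β) = 0`, whose larger root is `x* = (-1 + √(1 - cβ + β²))/β`.
The discriminant `1 - cβ + β² = (β - c/2)² + 1 - c²/4` is positive because `|c| < 2`, and
`x* ∈ (-1, 1)` amounts to `(1 - β)² < 1 - cβ + β² < (1 + β)²`, i.e. again to `-2 < c < 2`.
-/

namespace PoissonDOptimal

noncomputable def supportPoint (c β : ℝ) : ℝ := (-1 + √(1 - c * β + β ^ 2)) / β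

variable {c β : ℝ}

lemma discr_pos (hc₁ : -2 < c) (hc₂ : c < 2) : 0 < 1 - c * β + β ^ 2 := by
  nlinarith [sq_nonneg (2 * β - c), mul_pos (sub_pos.2 hc₂) (neg_lt_iff_pos_add.1 hc₁)]

lemma supportPoint_mem_Ioo (hc₁ : -2 < c) (hc₂ : c < 2) (hβ : 0 < β) :
    supportPoint c β ∈ Ioo (-1) 1 := by
  have hupper : √(1 - c * β + β ^ 2) < 1 + β := by
    rw [Real.sqrt_lt' (by linarith)]
    nlinarith
  have hlower : 1 - β < √(1 - c * β + β ^ 2) :=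
    Real.lt_sqrt_of_sq_lt (by nlinarith)
  rw [supportPoint, mem_Ioo, lt_div_iff₀ hβ, div_lt_one hβ]
  constructor <;> linarith

lemma mul_one_sub_supportPoint_sq (hD : 0 ≤ 1 - c * β + β ^ 2) (hβ : β ≠ 0) :
    β * (1 - supportPoint c β ^ 2) = c + 2 * supportPoint c β := by
  have hs := Real.sq_sqrt hD
  rw [supportPoint]
  generalize √(1 - c * β + β ^ 2) = s at hs ⊢
  field_simp
  linear_combination (-1) * hs

lemma eq_dOptimality_of_mul_one_sub_sq {k x : ℝ} (hk : k ≠ 0) (hx : x ^ 2 ≠ 1)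
    (h : β * (1 - x ^ 2) = 2 / k + 2 * x) : β = 2 * (1 + k * x) / (k * (1 - x ^ 2)) := by
  rw [eq_div_iff (mul_ne_zero hk (sub_ne_zero.2 hx.symm))]
  field_simp at h
  linear_combination h

end PoissonDOptimal

open PoissonDOptimal in
/-- For Poisson regression (`k ≥ 2`, `β₁ > 0`),
`x* = (-1 + √(1 - (2/k)β₁ + β₁²))/β₁` lies in `(-1,1)` and solves
`β₁ = 2(1+kx*)/(k(1-x*²))`; moreover the discriminant is positive. -/
theorem stmt10 (k : ℕ) (hk : 2 ≤ k) (β₁ : ℝ) (hβ : 0 < β₁) :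
    0 < 1 - (2 / k) * β₁ + β₁ ^ 2 ∧
    (-1 + Real.sqrt (1 - (2 / k) * β₁ + β₁ ^ 2)) / β₁ ∈ Ioo (-1 : ℝ) 1 ∧
    β₁ = 2 * (1 + k * ((-1 + Real.sqrt (1 - (2 / k) * β₁ + β₁ ^ 2)) / β₁)) /
        (k * (1 - ((-1 + Real.sqrt (1 - (2 / k) * β₁ + β₁ ^ 2)) / β₁) ^ 2)) := by
  have hk₂ : (2 : ℝ) ≤ k := by exact_mod_cast hk
  have hk₀ : (0 : ℝ) < k := by linarith
  have hc₁ : -2 < 2 / (k : ℝ) := by linarith [div_pos two_pos hk₀]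
  have hc₂ : 2 / (k : ℝ) < 2 := by
    rw [div_lt_iff₀ hk₀]
    linarith
  have hD := discr_pos (β := β₁) hc₁ hc₂
  have hx := supportPoint_mem_Ioo hc₁ hc₂ hβ
  have hx_sq : supportPoint (2 / k) β₁ ^ 2 ≠ 1 :=
    ((sq_lt_one_iff_abs_lt_one _).2 (abs_lt.2 hx)).ne
  exact ⟨hD, hx, eq_dOptimality_of_mul_one_sub_sq hk₀.ne' hx_sq
    (mul_one_sub_supportPoint_sq hD.le hβ.ne')⟩
end

section
/- For k ≥ 2, the map β₁ ↦ x*(β₁) = (−1 + √(1 − (2/k)β₁ + β₁²))/β₁ on (0, ∞), extended by x*(0) = −1/k, is continuous at 0, strictly increasing on [0, ∞), and satisfies lim_{β₁→∞} x*(β₁) = 1. -/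
/-!
Rationalizing the numerator, `(-1 + √(1 - c b + b²)) / b = (b - c) / (1 + √(1 - c b + b²))`
for `b ≠ 0`, and at `b = 0` the right-hand side is `-c / 2`, which is `-1/k` for `c = 2/k`.
The right-hand side has a denominator `≥ 1`, so it is continuous on all of `ℝ`, tends to `1`
at infinity after dividing through by `b`, and its derivative
`(2s + 2 + c b - c²) / (2s (1 + s)²)`, with `s = √(1 - c b + b²)`, is positive for `b ≥ 0`
once `0 ≤ c` and `c² ≤ 2`.
-/

open Set Filter Topology

noncomputable def xStar (c b : ℝ) : ℝ := (b - c) / (1 + √(1 - c * b + b ^ 2))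

lemma one_sub_mul_add_sq_pos {c : ℝ} (hc : c ^ 2 < 4) (b : ℝ) : 0 < 1 - c * b + b ^ 2 := by
  nlinarith [sq_nonneg (2 * b - c)]

lemma continuous_xStar (c : ℝ) : Continuous (xStar c) :=
  Continuous.div (by fun_prop) (by fun_prop) fun b => by positivity

lemma xStar_zero (c : ℝ) : xStar c 0 = -c / 2 := by
  norm_num [xStar]

lemma xStar_eq_div {c b : ℝ} (hq : 0 ≤ 1 - c * b + b ^ 2) (hb : b ≠ 0) :
    xStar c b = (-1 + √(1 - c * b + b ^ 2)) / b := by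
  rw [xStar, div_eq_div_iff (by positivity) hb]
  linear_combination -Real.sq_sqrt hq

lemma hasDerivAt_xStar {c x : ℝ} (hq : 0 < 1 - c * x + x ^ 2) :
    HasDerivAt (xStar c)
      ((2 * √(1 - c * x + x ^ 2) + 2 + c * x - c ^ 2) /
        (2 * √(1 - c * x + x ^ 2) * (1 + √(1 - c * x + x ^ 2)) ^ 2)) x := by
  have hs0 : 0 < √(1 - c * x + x ^ 2) := Real.sqrt_pos.2 hq
  have hq' : HasDerivAt (fun b => 1 - c * b + b ^ 2) (2 * x - c) x := by
    refine ((((hasDerivAt_id' x).const_mul c).const_sub 1).add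
      ((hasDerivAt_id' x).pow 2)).congr_deriv ?_
    norm_num
    ring
  refine (((hasDerivAt_id x).sub_const c).div ((hq'.sqrt hq.ne').const_add 1)
    (by positivity)).congr_deriv ?_
  simp only [id]
  field_simp
  linear_combination 2 * Real.sq_sqrt hq.le

lemma strictMonoOn_xStar {c : ℝ} (hc₀ : 0 ≤ c) (hc : c ^ 2 ≤ 2) :
    StrictMonoOn (xStar c) (Ici 0) := by
  have hq := one_sub_mul_add_sq_pos (c := c) (by linarith)
  refine strictMonoOn_of_deriv_pos (convex_Ici 0) (continuous_xStar c).continuousOn fun x hx => ?_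
  rw [interior_Ici] at hx
  have hs0 : 0 < √(1 - c * x + x ^ 2) := Real.sqrt_pos.2 (hq x)
  rw [(hasDerivAt_xStar (hq x)).deriv]
  have : 0 ≤ c * x := mul_nonneg hc₀ (le_of_lt hx)
  exact div_pos (by linarith) (by positivity)

lemma tendsto_xStar_atTop (c : ℝ) : Tendsto (xStar c) atTop (𝓝 1) := by
  have hinv : Tendsto (fun b : ℝ => b⁻¹) atTop (𝓝 0) := tendsto_inv_atTop_zero
  have hlim : Tendsto (fun b : ℝ => (1 - c * b⁻¹) / (b⁻¹ + √(b⁻¹ ^ 2 - c * b⁻¹ + 1)))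
      atTop (𝓝 1) := by
    convert ((hinv.const_mul c).const_sub 1).div
      (hinv.add (((hinv.pow 2).sub (hinv.const_mul c)).add_const 1).sqrt) (by norm_num)
      using 2 <;> simp
  refine hlim.congr' ?_
  filter_upwards [eventually_gt_atTop 0] with b hb
  have : b⁻¹ ^ 2 - c * b⁻¹ + 1 = (1 - c * b + b ^ 2) / b ^ 2 := by field_simp
  rw [xStar, this, Real.sqrt_div' _ (sq_nonneg b), Real.sqrt_sq hb.le]
  field_simp

/-- For `k ≥ 2`, the map `β₁ ↦ x*(β₁)`, with `x*(0) = -1/k`, is continuous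
at `0` (from the right), strictly increasing on `[0,∞)`, and tends to `1`
as `β₁ → ∞`. -/
theorem stmt11 (k : ℕ) (hk : 2 ≤ k) :
    ContinuousWithinAt
      (fun b : ℝ => if b = 0 then (-1 / k : ℝ)
        else (-1 + Real.sqrt (1 - (2 / k) * b + b ^ 2)) / b) (Ici 0) 0 ∧
    StrictMonoOn
      (fun b : ℝ => if b = 0 then (-1 / k : ℝ)
        else (-1 + Real.sqrt (1 - (2 / k) * b + b ^ 2)) / b) (Ici 0) ∧
    Tendsto
      (fun b : ℝ => if b = 0 then (-1 / k : ℝ)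
        else (-1 + Real.sqrt (1 - (2 / k) * b + b ^ 2)) / b) atTop (𝓝 1) := by
  have hc₀ : (0 : ℝ) ≤ 2 / k := by positivity
  have hc₁ : (2 / k : ℝ) ≤ 1 := by
    rw [div_le_one (by positivity)]
    exact_mod_cast hk
  have hc : (2 / k : ℝ) ^ 2 ≤ 2 := by nlinarith
  have hfun : (fun b : ℝ => if b = 0 then (-1 / k : ℝ)
      else (-1 + Real.sqrt (1 - (2 / k) * b + b ^ 2)) / b) = xStar (2 / k) := by
    funext b
    rcases eq_or_ne b 0 with rfl | hb
    · rw [if_pos rfl, xStar_zero]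
      ring
    · rw [if_neg hb, xStar_eq_div (one_sub_mul_add_sq_pos (by linarith) b).le hb]
  rw [hfun]
  exact ⟨(continuous_xStar _).continuousWithinAt, strictMonoOn_xStar hc₀ hc,
    tendsto_xStar_atTop _⟩
end

section
/- For k = 1 and Poisson regression with slope β₁ ≥ 0: if β₁ ∈ [0, 1] then the function x ↦ exp(β₁ x)(1 − x)² attains its maximum over [−1, 1) at x = −1; if β₁ > 1 the equation β₁ = 2/(1 − x) has the unique solution x = 1 − 2/β₁ ∈ (−1, 1), and exp(β₁ x)(1 − x)² attains its maximum there. -/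
open Real Set

/-! Writing `u = (1 - x) / (1 - a)`, the ratio of `exp (β x) (1 - x)²` to its value at `a < 1`
is `u² exp (κ (1 - u))` with `κ = β (1 - a)`. For `κ ≤ 2` and `0 ≤ u ≤ 1` this is at most
`(u exp (1 - u))² ≤ 1`, by `u ≤ exp (u - 1)`; for `κ = 2` the bound `u ≤ 1` is not needed.
Taking `a = -1` (so `κ = 2β₁ ≤ 2`) and `a = 1 - 2/β₁` (so `κ = 2`) gives the two cases. -/

theorem mul_exp_one_sub_le_one (u : ℝ) : u * exp (1 - u) ≤ 1 := by
  have h := add_one_le_exp (u - 1)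
  calc u * exp (1 - u) ≤ exp (u - 1) * exp (1 - u) := by
        gcongr
        linarith
    _ = 1 := by rw [← exp_add]; simp

theorem sq_mul_exp_le_one {u κ : ℝ} (hu : 0 ≤ u) (hκ : κ * (1 - u) ≤ 2 * (1 - u)) :
    u ^ 2 * exp (κ * (1 - u)) ≤ 1 := by
  have hsq : (u * exp (1 - u)) ^ 2 ≤ 1 :=
    pow_le_one₀ (by positivity) (mul_exp_one_sub_le_one u)
  calc u ^ 2 * exp (κ * (1 - u)) ≤ u ^ 2 * exp (2 * (1 - u)) := by gcongr
    _ = (u * exp (1 - u)) ^ 2 := by rw [mul_pow, ← exp_nat_mul]; push_cast; ring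
    _ ≤ 1 := hsq

theorem exp_mul_mul_one_sub_sq_eq {a : ℝ} (ha : a < 1) (β x : ℝ) :
    exp (β * x) * (1 - x) ^ 2 = exp (β * a) * (1 - a) ^ 2 *
      (((1 - x) / (1 - a)) ^ 2 * exp (β * (1 - a) * (1 - (1 - x) / (1 - a)))) := by
  have ha' : 1 - a ≠ 0 := by linarith
  have hexp : β * x = β * a + β * (1 - a) * (1 - (1 - x) / (1 - a)) := by
    field_simp; ring
  rw [hexp, exp_add]
  field_simp

theorem exp_mul_mul_one_sub_sq_le_of_mem_Icc {β a x : ℝ} (ha : a < 1)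
    (hβa : β * (1 - a) ≤ 2) (hx : x ∈ Icc a 1) :
    exp (β * x) * (1 - x) ^ 2 ≤ exp (β * a) * (1 - a) ^ 2 := by
  have hpos : 0 < 1 - a := by linarith
  have hu₀ : 0 ≤ (1 - x) / (1 - a) := div_nonneg (by linarith [hx.2]) hpos.le
  have hu₁ : (1 - x) / (1 - a) ≤ 1 := (div_le_one hpos).2 (by linarith [hx.1])
  rw [exp_mul_mul_one_sub_sq_eq ha]
  exact mul_le_of_le_one_right (by positivity) <|
    sq_mul_exp_le_one hu₀ (mul_le_mul_of_nonneg_right hβa (by linarith))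

theorem exp_mul_mul_one_sub_sq_le_of_le_one {β x : ℝ} (hβ : 0 < β) (hx : x ≤ 1) :
    exp (β * x) * (1 - x) ^ 2 ≤ exp (β * (1 - 2 / β)) * (1 - (1 - 2 / β)) ^ 2 := by
  have hc : 1 - 2 / β < 1 := by linarith [div_pos two_pos hβ]
  have hβc : β * (1 - (1 - 2 / β)) = 2 := by field_simp; ring
  rw [exp_mul_mul_one_sub_sq_eq hc]
  refine mul_le_of_le_one_right (by positivity) <| sq_mul_exp_le_one ?_ (by rw [hβc])
  exact div_nonneg (by linarith) (by linarith)

/-- Poisson regression on `[-1,1]` (`k = 1`): for `β₁ ∈ [0,1]` the function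
`exp(β₁x)(1-x)²` is maximized on `[-1,1)` at `x = -1`; for `β₁ > 1` the
equation `β₁ = 2/(1-x)` has the unique solution `x = 1 - 2/β₁ ∈ (-1,1)`,
where the maximum is attained. -/
theorem stmt13 (β₁ : ℝ) :
    (0 ≤ β₁ → β₁ ≤ 1 → ∀ x ∈ Ico (-1 : ℝ) 1,
      Real.exp (β₁ * x) * (1 - x) ^ 2
        ≤ Real.exp (β₁ * (-1)) * (1 - (-1 : ℝ)) ^ 2) ∧
    (1 < β₁ →
      (1 - 2 / β₁ ∈ Ioo (-1 : ℝ) 1 ∧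
      (∃! x : ℝ, x ∈ Ioo (-1 : ℝ) 1 ∧ β₁ = 2 / (1 - x)) ∧
      β₁ = 2 / (1 - (1 - 2 / β₁)) ∧
      ∀ x ∈ Ico (-1 : ℝ) 1,
        Real.exp (β₁ * x) * (1 - x) ^ 2
          ≤ Real.exp (β₁ * (1 - 2 / β₁)) * (1 - (1 - 2 / β₁)) ^ 2)) := by
  refine ⟨fun _ hβ₁ x hx => ?_, fun hβ₁ => ?_⟩
  · exact exp_mul_mul_one_sub_sq_le_of_mem_Icc (by norm_num) (by linarith)
      (Ico_subset_Icc_self hx)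
  have hβ₀ : 0 < β₁ := by linarith
  have hmem : 1 - 2 / β₁ ∈ Ioo (-1 : ℝ) 1 := by
    constructor
    · linarith [(div_lt_iff₀ hβ₀).2 (by linarith : (2 : ℝ) < 2 * β₁)]
    · linarith [div_pos two_pos hβ₀]
  have hcrit : β₁ = 2 / (1 - (1 - 2 / β₁)) := by field_simp; ring
  refine ⟨hmem, ⟨1 - 2 / β₁, ⟨hmem, hcrit⟩, ?_⟩, hcrit,
    fun x hx => exp_mul_mul_one_sub_sq_le_of_le_one hβ₀ hx.2.le⟩
  rintro y ⟨hy, rfl⟩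
  have : 1 - y ≠ 0 := by linarith [hy.2]
  field_simp; ring
end

section
/- Let k ≥ 2, x* ∈ (−1,1), q: [−1,1] → (0,∞), let s̃_1,…,s̃_k ∈ ℝ^{k−1} be unit vectors with pairwise inner products −1/(k−1) (vertices of a regular simplex in S^{k−2}), and set s_κ = √(1−x*²)·s̃_κ. Define support points p₀ = (1, 0,…,0)ᵀ and p_κ = (x*, s_κᵀ)ᵀ ∈ S^{k−1} for κ = 1,…,k. Then (1/(k+1))[ q(1) f(p₀)f(p₀)ᵀ + Σ_{κ=1}^{k} q(x*) f(p_κ)f(p_κ)ᵀ ] equals the information matrix of the design putting mass 1/(k+1) at p₀ and mass k/(k+1) uniformly on the orbit {x*} × S^{k−2}(√(1−x*²)); in particular the off-pole part equals (k/(k+1)) q(x*) Q ( ∫_{S^{k−2}} f̃(z) f̃(z)ᵀ dμ(z) ) Qᵀ with Q the block matrix with first column (1, x*, 0,…,0)ᵀ and lower-right block √(1−x*²) I_{k−1}. -/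
open MeasureTheory Matrix Set Filter Topology

/-!
Both sides reduce to the moment matrix `M = diag(1, 1/n, …, 1/n)` of `f̃(z) = (1, z)`.
For the orthogonally invariant probability measure `μ` on the sphere, coordinate reflections and
swaps give `∫ z dμ = 0` and `∫ z zᵀ dμ = (1/n) I`. For the simplex, the Gram conditions say that the
square matrix `T` with rows `f̃(s̃_κ)` satisfies `T W Tᵀ = (n+1) I` with `W = diag(1, n, …, n)`;
since a one-sided inverse of a square matrix is two-sided, also `W Tᵀ T = (n+1) I`, i.e.
`∑_κ f̃(s̃_κ) f̃(s̃_κ)ᵀ = Tᵀ T = (n+1) M`. Finally `f(p_κ) = Q f̃(s̃_κ)`, so the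
orbit part of the discrete design is `Q (∑_κ f̃ f̃ᵀ) Qᵀ`.
-/

lemma Matrix.transpose_mul_self_eq_sum_vecMulVec {ι m R : Type*} [Fintype ι] [CommSemiring R]
    (T : Matrix ι m R) : Tᵀ * T = ∑ i, vecMulVec (T i) (T i) := by
  ext a b
  simp [mul_apply, Matrix.sum_apply, vecMulVec_apply]

lemma mul_vecMulVec_self_mul_transpose {l m R : Type*} [Fintype m] [CommSemiring R]
    (Q : Matrix l m R) (w : m → R) :
    Q * vecMulVec w w * Qᵀ = vecMulVec (Q *ᵥ w) (Q *ᵥ w) := by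
  rw [mul_vecMulVec, vecMulVec_mul, vecMul_transpose]

def IsRegularSimplex {n : ℕ} (S : Matrix (Fin (n+1)) (Fin n) ℝ) : Prop :=
  (∀ i, ∑ t, S i t ^ 2 = 1) ∧ ∀ i j, i ≠ j → ∑ t, S i t * S j t = -1 / n

namespace IsRegularSimplex

variable {n : ℕ} {S : Matrix (Fin (n+1)) (Fin n) ℝ}

lemma lift_mul_diagonal_mul_transpose (hS : IsRegularSimplex S) (hn : n ≠ 0) :
    (of fun i => (Fin.cons 1 (S i) : Fin (n+1) → ℝ)) * diagonal (Fin.cons 1 fun _ => (n : ℝ)) *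
        (of fun i => (Fin.cons 1 (S i) : Fin (n+1) → ℝ))ᵀ
      = (n + 1 : ℝ) • 1 := by
  ext i j
  rw [mul_apply, Matrix.smul_apply, one_apply]
  simp only [mul_diagonal, transpose_apply, of_apply, Fin.sum_univ_succ, Fin.cons_zero,
    Fin.cons_succ, mul_one]
  simp_rw [mul_comm _ (n : ℝ), mul_assoc, ← Finset.mul_sum]
  obtain rfl | hij := eq_or_ne i j
  · simp_rw [← sq, hS.1 i]
    simp only [if_true, smul_eq_mul]
    ring
  · rw [hS.2 i j hij, if_neg hij]
    field_simp
    ring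

lemma sum_vecMulVec_cons_one (hS : IsRegularSimplex S) (hn : n ≠ 0) :
    ∑ i, vecMulVec (Fin.cons 1 (S i) : Fin (n+1) → ℝ) (Fin.cons 1 (S i))
      = (n + 1 : ℝ) • diagonal (Fin.cons 1 fun _ => (n : ℝ)⁻¹) := by
  set T : Matrix (Fin (n+1)) (Fin (n+1)) ℝ := of fun i => Fin.cons 1 (S i)
  set W : Matrix (Fin (n+1)) (Fin (n+1)) ℝ := diagonal (Fin.cons 1 fun _ => (n : ℝ))
  have hn1 : (n + 1 : ℝ) ≠ 0 := by positivity
  have hWTT : W * Tᵀ * T = (n + 1 : ℝ) • 1 := by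
    have h : ((n + 1 : ℝ)⁻¹ • T) * (W * Tᵀ) = 1 := by
      rw [smul_mul, ← mul_assoc, hS.lift_mul_diagonal_mul_transpose hn, smul_smul,
        inv_mul_cancel₀ hn1, one_smul]
    calc W * Tᵀ * T = (n + 1 : ℝ) • (W * Tᵀ * ((n + 1 : ℝ)⁻¹ • T)) := by
          rw [Matrix.mul_smul, smul_smul, mul_inv_cancel₀ hn1, one_smul]
      _ = (n + 1 : ℝ) • 1 := by rw [mul_eq_one_comm.mp h]
  have hW : diagonal (Fin.cons 1 fun _ => (n : ℝ)⁻¹) * W = 1 := by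
    rw [diagonal_mul_diagonal, ← diagonal_one]
    congr 1
    ext i
    refine Fin.cases ?_ (fun i => ?_) i <;> simp [hn]
  calc ∑ i, vecMulVec (Fin.cons 1 (S i) : Fin (n+1) → ℝ) (Fin.cons 1 (S i))
      = Tᵀ * T := (transpose_mul_self_eq_sum_vecMulVec T).symm
    _ = diagonal (Fin.cons 1 fun _ => (n : ℝ)⁻¹) * (W * Tᵀ * T) := by
        rw [← mul_assoc, ← mul_assoc, hW, one_mul]
    _ = (n + 1 : ℝ) • diagonal (Fin.cons 1 fun _ => (n : ℝ)⁻¹) := by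
        rw [hWTT, Matrix.mul_smul, mul_one]

end IsRegularSimplex

def OrthogonallyInvariant {n : ℕ} (μ : Measure (Fin n → ℝ)) : Prop :=
  ∀ O : Matrix (Fin n) (Fin n) ℝ, O * Oᵀ = 1 → μ.map (fun z => O.mulVec z) = μ

namespace OrthogonallyInvariant

variable {n : ℕ} {μ : Measure (Fin n → ℝ)}

lemma integral_comp_mulVec (hμ : OrthogonallyInvariant μ) {O : Matrix (Fin n) (Fin n) ℝ}
    (hO : O * Oᵀ = 1) {g : (Fin n → ℝ) → ℝ} (hg : Continuous g) :
    ∫ z, g (O *ᵥ z) ∂μ = ∫ z, g z ∂μ := by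
  conv_rhs => rw [← hμ O hO]
  exact (integral_map (Continuous.matrix_mulVec continuous_const continuous_id).aemeasurable
    hg.aestronglyMeasurable).symm

lemma integral_eq_zero_of_odd (hμ : OrthogonallyInvariant μ) (i : Fin n)
    {g : (Fin n → ℝ) → ℝ} (hg : Continuous g)
    (hodd : ∀ z, g (fun j => (if j = i then -1 else 1) * z j) = -g z) :
    ∫ z, g z ∂μ = 0 := by
  set d : Fin n → ℝ := fun j => if j = i then -1 else 1
  have hO : diagonal d * (diagonal d)ᵀ = 1 := by
    rw [diagonal_transpose, diagonal_mul_diagonal, ← diagonal_one]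
    congr 1
    ext j
    by_cases hj : j = i <;> simp [d, hj]
  have hd (z : Fin n → ℝ) : diagonal d *ᵥ z = fun j => d j * z j := funext (mulVec_diagonal d z)
  have h := hμ.integral_comp_mulVec hO hg
  simp only [hd, d, hodd, integral_neg] at h
  linarith

lemma integral_apply (hμ : OrthogonallyInvariant μ) (i : Fin n) : ∫ z, z i ∂μ = 0 :=
  hμ.integral_eq_zero_of_odd i (continuous_apply i) fun z => by simp

lemma integral_apply_mul_apply_of_ne (hμ : OrthogonallyInvariant μ) {i j : Fin n}
    (hij : i ≠ j) : ∫ z, z i * z j ∂μ = 0 :=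
  hμ.integral_eq_zero_of_odd i ((continuous_apply i).mul (continuous_apply j)) fun z => by
    simp [hij.symm]

lemma integral_apply_sq_eq (hμ : OrthogonallyInvariant μ) (i j : Fin n) :
    ∫ z, z i ^ 2 ∂μ = ∫ z, z j ^ 2 ∂μ := by
  have hO : (Equiv.swap i j).permMatrix ℝ * ((Equiv.swap i j).permMatrix ℝ)ᵀ = 1 := by
    rw [transpose_permMatrix, ← permMatrix_mul, inv_mul_cancel, permMatrix_one]
  have h := hμ.integral_comp_mulVec hO ((continuous_apply j).pow 2)
  simpa [permMatrix_mulVec] using h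

variable [IsProbabilityMeasure μ]

lemma integral_apply_sq (hμ : OrthogonallyInvariant μ) (hn : n ≠ 0)
    (hsupp : μ {z | ∑ i, z i ^ 2 = 1} = 1) (i : Fin n) :
    ∫ z, z i ^ 2 ∂μ = (n : ℝ)⁻¹ := by
  have hsphere : ∀ᵐ z ∂μ, ∑ i, z i ^ 2 = 1 := by
    rw [ae_iff_measure_eq, hsupp, measure_univ]
    exact (measurableSet_eq_fun (by fun_prop) measurable_const).nullMeasurableSet
  have hint (j : Fin n) : Integrable (fun z => z j ^ 2) μ := by
    refine .of_bound ((continuous_apply j).pow 2).aestronglyMeasurable 1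
      (hsphere.mono fun z hz => ?_)
    rw [Real.norm_of_nonneg (sq_nonneg _), ← hz]
    exact Finset.single_le_sum (fun t _ => sq_nonneg (z t)) (Finset.mem_univ j)
  have htotal : ∑ j, ∫ z, z j ^ 2 ∂μ = 1 := by
    rw [← integral_finsetSum _ fun j _ => hint j, integral_congr_ae hsphere]
    simp
  simp only [hμ.integral_apply_sq_eq _ i, Finset.sum_const, Finset.card_univ, Fintype.card_fin,
    nsmul_eq_mul] at htotal
  field_simp
  linarith

lemma integral_cons_one_mul_cons_one (hμ : OrthogonallyInvariant μ) (hn : n ≠ 0)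
    (hsupp : μ {z | ∑ i, z i ^ 2 = 1} = 1) :
    (of fun a b =>
        ∫ z, (Fin.cons 1 z : Fin (n+1) → ℝ) a * (Fin.cons 1 z : Fin (n+1) → ℝ) b ∂μ)
      = diagonal (Fin.cons 1 fun _ => (n : ℝ)⁻¹) := by
  ext a b
  rw [of_apply, diagonal_apply]
  induction a using Fin.cases with
  | zero => induction b using Fin.cases <;> simp [hμ.integral_apply, (Fin.succ_ne_zero _).symm]
  | succ i =>
    induction b using Fin.cases with
    | zero => simp [hμ.integral_apply]
    | succ j =>
      obtain rfl | hij := eq_or_ne i j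
      · simpa [← sq] using hμ.integral_apply_sq hn hsupp i
      · simp [hij, hμ.integral_apply_mul_apply_of_ne hij]

end OrthogonallyInvariant

lemma mulVec_cons_one_eq_cons_cons {n : ℕ} (x r : ℝ) (s : Fin n → ℝ) :
    (of fun (a : Fin (n+2)) (b : Fin (n+1)) =>
        if (b : ℕ) = 0 then (if (a : ℕ) = 0 then (1:ℝ) else if (a : ℕ) = 1 then x else 0)
        else (if (a : ℕ) = (b : ℕ) + 1 then r else 0)) *ᵥ Fin.cons 1 s
      = Fin.cons 1 (Fin.cons x fun t => r * s t) := by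
  ext a
  rw [mulVec, dotProduct, Fin.sum_univ_succ]
  induction a using Fin.cases with
  | zero => simp
  | succ a =>
    induction a using Fin.cases with
    | zero => simp
    | succ t => simp [Fin.val_succ, Fin.val_inj]

theorem stmt17_general (n : ℕ) (hn : 1 ≤ n) (xs : ℝ)
    (q : ℝ → ℝ)
    (st : Fin (n+1) → (Fin n → ℝ))
    (hnorm : ∀ i, ∑ t, (st i t) ^ 2 = 1)
    (hip : ∀ i j, i ≠ j → ∑ t, st i t * st j t = -1 / n)
    (μ : Measure (Fin n → ℝ)) [IsProbabilityMeasure μ]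
    (hsupp : μ {z | ∑ i, (z i) ^ 2 = 1} = 1)
    (hinv : ∀ O : Matrix (Fin n) (Fin n) ℝ, O * Oᵀ = 1 →
      μ.map (fun z => O.mulVec z) = μ) :
    (1 / (n + 2 : ℝ)) •
        (q 1 • (Matrix.of fun a b : Fin (n+2) =>
            (Fin.cons 1 (fun i : Fin (n+1) => if i = 0 then (1:ℝ) else 0) : Fin (n+2) → ℝ) a *
            (Fin.cons 1 (fun i : Fin (n+1) => if i = 0 then (1:ℝ) else 0) : Fin (n+2) → ℝ) b) +
          ∑ κ : Fin (n+1), q xs • (Matrix.of fun a b : Fin (n+2) =>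
            (Fin.cons 1 (Fin.cons xs (fun t => Real.sqrt (1 - xs ^ 2) * st κ t)) : Fin (n+2) → ℝ) a *
            (Fin.cons 1 (Fin.cons xs (fun t => Real.sqrt (1 - xs ^ 2) * st κ t)) : Fin (n+2) → ℝ) b))
      = (1 / (n + 2 : ℝ)) • q 1 • (Matrix.of fun a b : Fin (n+2) =>
            (Fin.cons 1 (fun i : Fin (n+1) => if i = 0 then (1:ℝ) else 0) : Fin (n+2) → ℝ) a *
            (Fin.cons 1 (fun i : Fin (n+1) => if i = 0 then (1:ℝ) else 0) : Fin (n+2) → ℝ) b) +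
        ((n + 1 : ℝ) / (n + 2 : ℝ)) • q xs •
          ((Matrix.of fun (a : Fin (n+2)) (b : Fin (n+1)) =>
              if (b : ℕ) = 0 then
                (if (a : ℕ) = 0 then (1:ℝ) else if (a : ℕ) = 1 then xs else 0)
              else (if (a : ℕ) = (b : ℕ) + 1 then Real.sqrt (1 - xs ^ 2) else 0)) *
            (Matrix.of fun a b : Fin (n+1) =>
              ∫ z, (Fin.cons 1 z : Fin (n+1) → ℝ) a * (Fin.cons 1 z : Fin (n+1) → ℝ) b ∂μ) *
            (Matrix.of fun (a : Fin (n+2)) (b : Fin (n+1)) =>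
              if (b : ℕ) = 0 then
                (if (a : ℕ) = 0 then (1:ℝ) else if (a : ℕ) = 1 then xs else 0)
              else (if (a : ℕ) = (b : ℕ) + 1 then Real.sqrt (1 - xs ^ 2) else 0))ᵀ) := by
  have hn0 : n ≠ 0 := by omega
  have hμ : OrthogonallyInvariant μ := hinv
  have hmoments :
      (of fun a b => ∫ z, (Fin.cons 1 z : Fin (n+1) → ℝ) a * (Fin.cons 1 z : Fin (n+1) → ℝ) b ∂μ)
        = (n + 1 : ℝ)⁻¹ • ∑ κ, vecMulVec (Fin.cons 1 (st κ) : Fin (n+1) → ℝ) (Fin.cons 1 (st κ)) := by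
    rw [hμ.integral_cons_one_mul_cons_one hn0 hsupp,
      IsRegularSimplex.sum_vecMulVec_cons_one ⟨hnorm, hip⟩ hn0, smul_smul,
      inv_mul_cancel₀ (by positivity), one_smul]
  rw [hmoments, Matrix.mul_smul, Matrix.smul_mul, Matrix.mul_sum, Matrix.sum_mul]
  simp only [mul_vecMulVec_self_mul_transpose, mulVec_cons_one_eq_cons_cons]
  rw [smul_add, ← Finset.smul_sum]
  congr 1
  rw [smul_smul, smul_smul, smul_smul]
  congr 1
  field_simp

/-- Discretization of the invariant design on the ball `B_k` with `k = n+1 ≥ 2`: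
the `k+1`-point design with pole `p₀ = (1,0,…,0)` and the `k` scaled simplex
points `p_κ = (x*, √(1-x*²) s̃_κ)` has the same information matrix as the
generalized design putting mass `1/(k+1)` at the pole and mass `k/(k+1)`
uniformly on the orbit `{x*} × S^{k-2}(√(1-x*²))`, the orbit part being
`Q (∫ f̃ f̃ᵀ dμ) Qᵀ` with `μ` the uniform measure on `S^{k-2}`. -/
theorem stmt17 (n : ℕ) (hn : 1 ≤ n) (xs : ℝ) (hxs : xs ∈ Ioo (-1 : ℝ) 1)
    (q : ℝ → ℝ) (hq : ∀ x, 0 < q x)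
    (st : Fin (n+1) → (Fin n → ℝ))
    (hnorm : ∀ i, ∑ t, (st i t) ^ 2 = 1)
    (hip : ∀ i j, i ≠ j → ∑ t, st i t * st j t = -1 / n)
    (μ : Measure (Fin n → ℝ)) [IsProbabilityMeasure μ]
    (hsupp : μ {z | ∑ i, (z i) ^ 2 = 1} = 1)
    (hinv : ∀ O : Matrix (Fin n) (Fin n) ℝ, O * Oᵀ = 1 →
      μ.map (fun z => O.mulVec z) = μ) :
    (1 / (n + 2 : ℝ)) •
        (q 1 • (Matrix.of fun a b : Fin (n+2) =>
            (Fin.cons 1 (fun i : Fin (n+1) => if i = 0 then (1:ℝ) else 0) : Fin (n+2) → ℝ) a *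
            (Fin.cons 1 (fun i : Fin (n+1) => if i = 0 then (1:ℝ) else 0) : Fin (n+2) → ℝ) b) +
          ∑ κ : Fin (n+1), q xs • (Matrix.of fun a b : Fin (n+2) =>
            (Fin.cons 1 (Fin.cons xs (fun t => Real.sqrt (1 - xs ^ 2) * st κ t)) : Fin (n+2) → ℝ) a *
            (Fin.cons 1 (Fin.cons xs (fun t => Real.sqrt (1 - xs ^ 2) * st κ t)) : Fin (n+2) → ℝ) b))
      = (1 / (n + 2 : ℝ)) • q 1 • (Matrix.of fun a b : Fin (n+2) =>
            (Fin.cons 1 (fun i : Fin (n+1) => if i = 0 then (1:ℝ) else 0) : Fin (n+2) → ℝ) a *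
            (Fin.cons 1 (fun i : Fin (n+1) => if i = 0 then (1:ℝ) else 0) : Fin (n+2) → ℝ) b) +
        ((n + 1 : ℝ) / (n + 2 : ℝ)) • q xs •
          ((Matrix.of fun (a : Fin (n+2)) (b : Fin (n+1)) =>
              if (b : ℕ) = 0 then
                (if (a : ℕ) = 0 then (1:ℝ) else if (a : ℕ) = 1 then xs else 0)
              else (if (a : ℕ) = (b : ℕ) + 1 then Real.sqrt (1 - xs ^ 2) else 0)) *
            (Matrix.of fun a b : Fin (n+1) =>
              ∫ z, (Fin.cons 1 z : Fin (n+1) → ℝ) a * (Fin.cons 1 z : Fin (n+1) → ℝ) b ∂μ) *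
            (Matrix.of fun (a : Fin (n+2)) (b : Fin (n+1)) =>
              if (b : ℕ) = 0 then
                (if (a : ℕ) = 0 then (1:ℝ) else if (a : ℕ) = 1 then xs else 0)
              else (if (a : ℕ) = (b : ℕ) + 1 then Real.sqrt (1 - xs ^ 2) else 0))ᵀ) :=
  stmt17_general n hn xs q st hnorm hip μ hsupp hinv
end

section
/- Let β₁ > 0, a > 0, β₀ ∈ ℝ, k ≥ 2, and x* ∈ (−1,1) with x* ≠ 0. If β₁/(1 + a exp(β₀ + β₁ x*)) = 2(1 + k x*)/(k(1 − x*²)), then β₁ = −(1/x*)·W( −(2 a x* (1 + k x*))/(k(1 − x*²)) · exp(β₀ + 2 x* (1 + k x*)/(k(1 − x*²))) ) + 2(1 + k x*)/(k(1 − x*²)), where W is a branch of the Lambert W function (i.e., W(y)e^{W(y)} = y). -/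
open Set

/-- Writing the fixed-point equation `β = c (1 + a e^{b + β x})` as `(β - c) = c a e^{b + β x}`
and multiplying by `-x e^{-x(β - c)}` puts it in the form `w e^w = y` with `w = -x (β - c)`. -/
theorem Real.exists_mul_exp_eq_of_eq_mul_one_add_exp {a b c β x : ℝ} (hx : x ≠ 0)
    (h : β = c * (1 + a * Real.exp (b + β * x))) :
    ∃ w : ℝ, w * Real.exp w = -(a * x * c) * Real.exp (b + c * x) ∧ β = -(1 / x) * w + c := by
  refine ⟨-x * (β - c), ?_, ?_⟩
  · have hexp : Real.exp (b + c * x) = Real.exp (b + β * x) * Real.exp (-x * (β - c)) := by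
      rw [← Real.exp_add]; ring_nf
    rw [hexp]
    linear_combination (-x * Real.exp (-x * (β - c))) * h
  · field_simp
    ring

theorem stmt19_general (k : ℕ) (a β₀ β₁ xs : ℝ) (ha : 0 < a)
    (hx0 : xs ≠ 0)
    (heq : β₁ / (1 + a * Real.exp (β₀ + β₁ * xs))
      = 2 * (1 + k * xs) / (k * (1 - xs ^ 2))) :
    ∃ w : ℝ,
      w * Real.exp w
        = -(2 * a * xs * (1 + k * xs)) / (k * (1 - xs ^ 2)) *
            Real.exp (β₀ + 2 * xs * (1 + k * xs) / (k * (1 - xs ^ 2))) ∧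
      β₁ = -(1 / xs) * w + 2 * (1 + k * xs) / (k * (1 - xs ^ 2)) := by
  have hfix : β₁ = 2 * (1 + k * xs) / (k * (1 - xs ^ 2)) * (1 + a * Real.exp (β₀ + β₁ * xs)) :=
    (div_eq_iff (by positivity)).mp heq
  obtain ⟨w, hw, hβ₁⟩ := Real.exists_mul_exp_eq_of_eq_mul_one_add_exp hx0 hfix
  refine ⟨w, ?_, hβ₁⟩
  convert hw using 3 <;> ring

/-- Inversion of the negative-binomial optimality equation via the Lambert W
function: if `x*` solves the optimality equation, then for the appropriate
branch value `w` (i.e. some `w` with `w e^w = y` for the stated argument `y`)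
one has `β₁ = -(1/x*) w + 2(1+kx*)/(k(1-x*²))`. -/
theorem stmt19 (k : ℕ) (hk : 2 ≤ k) (a β₀ β₁ xs : ℝ) (ha : 0 < a) (hβ : 0 < β₁)
    (hx : xs ∈ Ioo (-1 : ℝ) 1) (hx0 : xs ≠ 0)
    (heq : β₁ / (1 + a * Real.exp (β₀ + β₁ * xs))
      = 2 * (1 + k * xs) / (k * (1 - xs ^ 2))) :
    ∃ w : ℝ,
      w * Real.exp w
        = -(2 * a * xs * (1 + k * xs)) / (k * (1 - xs ^ 2)) *
            Real.exp (β₀ + 2 * xs * (1 + k * xs) / (k * (1 - xs ^ 2))) ∧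
      β₁ = -(1 / xs) * w + 2 * (1 + k * xs) / (k * (1 - xs ^ 2)) :=
  stmt19_general k a β₀ β₁ xs ha hx0 heq
end
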